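/- For all integers d ≥ 1, k ≥ 1 and all integers r, s_Y, s_Z, m_Y, m_Z, m_W with 0 ≤ r ≤ k, 0 ≤ s_Y ≤ k, 0 ≤ s_Z ≤ min(k−r, k−s_Y), 0 ≤ m_Y ≤ k, 0 ≤ m_Z ≤ min(k−r, k−m_Y), 0 ≤ m_W ≤ min(k−s, k−m_Y−m_Z), setting s := s_Y + s_Z and m := m_Y + m_Z + m_W, one has ∫_{(B)^{4k−r−s−m}} h_1(y_0,…,y_{k−1}) · h_1(y_0,…,y_{r−1}, z_0,…,z_{k−r−1}) · h_1(y_0,…,y_{s_Y−1}, z_0,…,z_{s_Z−1}, w_0,…,w_{k−s−1}) · h_1(y_0,…,y_{m_Y−1}, z_0,…,z_{m_Z−1}, w_0,…,w_{m_W−1}, u_0,…,u_{k−m−1}) dy dz dw du ≤ ( (k+1)(k−r+1)(k−s+1)(k−m+1) )^d, where B := [−1,1]^d ⊂ ℝ^d. -/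

import Mathlib

open MeasureTheory

open Classical in
/-- The indicator of a proposition, as a real number. -/
noncomputable def ind (p : Prop) : ℝ := if p then 1 else 0

/-- All points of a set `P ⊆ ℝ^d` (with the sup norm) are pairwise within distance `δ`. -/
def closeP {d : ℕ} (δ : ℝ) (P : Set (Fin d → ℝ)) : Prop :=
  ∀ a ∈ P, ∀ b ∈ P, ‖a - b‖ ≤ δ

/-!
Dropping from the last three factors the points shared with earlier groups only increases the
integrand, and what remains is a product of four factors in disjoint groups of variables, so the
integral is at most a product of four integrals `∫_{B^n} h_1`. Such an integral factors over the
`d` coordinates into the `d`-th power of the volume of `{v ∈ [-1,1]^n : max v - min v ≤ 1}`.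
This set is covered by `[0,1]^n` together with the `n` sets on which `v_i ∈ [-1,0]` and
`v_j ∈ [v_i, v_i + 1]` for all `j`; each of these has volume `1`, whence the bound `n + 1`.
-/

open Set
open scoped ENNReal

lemma ind_nonneg (p : Prop) : 0 ≤ ind p := by
  classical
  unfold ind; split_ifs <;> norm_num

lemma ind_le_one (p : Prop) : ind p ≤ 1 := by
  classical
  unfold ind; split_ifs <;> norm_num

lemma ind_mono {p q : Prop} (h : p → q) : ind p ≤ ind q := by
  classical
  unfold ind; split_ifs <;> simp_all

lemma ind_eq_indicator_one {α : Type*} (P : α → Prop) (x : α) :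
    ind (P x) = {x | P x}.indicator 1 x := by
  classical
  simp [ind, indicator_apply]

lemma closeP.mono {d : ℕ} {δ : ℝ} {P Q : Set (Fin d → ℝ)} (hQ : Q ⊆ P) (hP : closeP δ P) :
    closeP δ Q :=
  fun a ha b hb => hP a (hQ ha) b (hQ hb)

lemma closeP_range_iff {ι : Type*} {d : ℕ} {δ : ℝ} (y : ι → Fin d → ℝ) :
    closeP δ (range y) ↔ ∀ i j, ‖y i - y j‖ ≤ δ := by
  simp [closeP]

lemma measurableSet_setOf_closeP_range {ι : Type*} [Countable ι] (d : ℕ) (δ : ℝ) :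
    MeasurableSet {y : ι → Fin d → ℝ | closeP δ (range y)} := by
  simp only [closeP_range_iff, ofPred_forall]
  measurability

/-- The paper's `h_1(y_i : i ∈ ι)`. -/
noncomputable def clusterInd {ι : Type*} {d : ℕ} (y : ι → Fin d → ℝ) : ℝ :=
  ind (closeP 1 (range y))

lemma clusterInd_nonneg {ι : Type*} {d : ℕ} (y : ι → Fin d → ℝ) : 0 ≤ clusterInd y :=
  ind_nonneg _

lemma ind_closeP_union_range_le {ι : Type*} {d : ℕ} (P : Set (Fin d → ℝ)) (y : ι → Fin d → ℝ) :
    ind (closeP 1 (P ∪ range y)) ≤ clusterInd y :=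
  ind_mono (closeP.mono subset_union_right)

lemma measurable_clusterInd {ι : Type*} [Countable ι] (d : ℕ) :
    Measurable (clusterInd : (ι → Fin d → ℝ) → ℝ) := by
  unfold clusterInd
  simp_rw [ind_eq_indicator_one fun y : ι → Fin d → ℝ => closeP 1 (range y)]
  exact measurable_one.indicator (measurableSet_setOf_closeP_range d 1)

lemma volume_pi_pi_Icc_zero_one (ι κ : Type*) [Fintype ι] [Fintype κ] :
    volume (univ.pi fun _ : ι => univ.pi fun _ : κ => Icc (0 : ℝ) 1) = 1 := by
  simp only [volume_pi_pi, Real.volume_Icc, sub_zero, ENNReal.ofReal_one, Finset.prod_const_one]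

/- Both `volume.map e` and `volume` are additive Haar measures, hence proportional, and both give
the unit cube mass `1`. -/
theorem measurePreserving_piComm (ι κ : Type*) [Fintype ι] [Fintype κ] :
    MeasurePreserving (Equiv.piComm fun (_ : ι) (_ : κ) => ℝ) := by
  let e : (ι → κ → ℝ) ≃+ (κ → ι → ℝ) := { Equiv.piComm _ with map_add' := fun _ _ => rfl }
  have he : Continuous e := show Continuous fun (y : ι → κ → ℝ) (c : κ) (i : ι) => y i c by
    fun_prop
  have he' : Continuous e.symm := show Continuous fun (y : κ → ι → ℝ) (i : ι) (c : κ) => y c i by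
    fun_prop
  have : (volume : Measure (ι → κ → ℝ)).IsAddHaarMeasure := Measure.pi.isAddHaarMeasure _
  have : (volume : Measure (κ → ι → ℝ)).IsAddHaarMeasure := Measure.pi.isAddHaarMeasure _
  have := e.isAddHaarMeasure_map volume he he'
  refine ⟨he.measurable, ?_⟩
  have hQ : MeasurableSet (univ.pi fun _ : κ => univ.pi fun _ : ι => Icc (0 : ℝ) 1) :=
    .univ_pi fun _ => .univ_pi fun _ => measurableSet_Icc
  have hpre : e ⁻¹' (univ.pi fun _ => univ.pi fun _ => Icc 0 1) =
      univ.pi fun _ => univ.pi fun _ => Icc 0 1 := by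
    ext y
    simp only [mem_preimage, mem_univ_pi]
    exact forall_comm
  have h := Measure.isAddLeftInvariant_eq_smul (volume.map e) volume
  have h1 := congrArg (fun μ : Measure (κ → ι → ℝ) => μ (univ.pi fun _ => univ.pi fun _ => Icc 0 1))
    h
  simp only [Measure.map_apply he.measurable hQ, hpre, volume_pi_pi_Icc_zero_one,
    Measure.smul_apply, ENNReal.smul_def, smul_eq_mul, mul_one] at h1
  change volume.map e = volume
  rw [h, ENNReal.coe_eq_one.1 h1.symm, one_smul]

def clusterBox (n : ℕ) : Set (Fin n → ℝ) :=
  {v | (∀ i, v i ∈ Icc (-1) 1) ∧ ∀ i j, |v i - v j| ≤ 1}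

lemma measurableSet_clusterBox (n : ℕ) : MeasurableSet (clusterBox n) := by
  simp only [clusterBox, ofPred_and, ofPred_forall]
  measurability

lemma volume_setOf_mem_Icc_add_one_le {n : ℕ} (i : Fin n) {s : Set ℝ} (hs : MeasurableSet s) :
    volume {v : Fin n → ℝ | v i ∈ s ∧ ∀ j, v j ∈ Icc (v i) (v i + 1)} ≤ volume s := by
  cases n with
  | zero => exact i.elim0
  | succ m =>
  let e := MeasurableEquiv.piFinSuccAbove (fun _ : Fin (m + 1) => ℝ) i
  let S : Set (ℝ × (Fin m → ℝ)) := {p | p.1 ∈ s ∧ ∀ j, p.2 j ∈ Icc p.1 (p.1 + 1)}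
  have hS : MeasurableSet S := by
    simp only [S, mem_Icc, ofPred_and, ofPred_forall]
    measurability
  have hslice : ∀ t, volume (Prod.mk t ⁻¹' S) = s.indicator 1 t := by
    intro t
    by_cases ht : t ∈ s
    · have : Prod.mk t ⁻¹' S = univ.pi fun _ => Icc t (t + 1) := by
        ext w; simp only [S, mem_preimage, mem_ofPred_eq, ht, true_and, mem_univ_pi]
      simp only [this, volume_pi_pi, Real.volume_Icc, add_sub_cancel_left, ENNReal.ofReal_one,
        Finset.prod_const_one, indicator_of_mem ht, Pi.one_apply]
    · have : Prod.mk t ⁻¹' S = ∅ := by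
        ext w; simp [S, ht]
      simp [this, ht]
  calc volume {v : Fin (m + 1) → ℝ | v i ∈ s ∧ ∀ j, v j ∈ Icc (v i) (v i + 1)}
      ≤ volume (e ⁻¹' S) := measure_mono fun v hv => ⟨hv.1, fun j => hv.2 _⟩
    _ = (volume.prod volume) S :=
        (volume_preserving_piFinSuccAbove _ i).measure_preimage hS.nullMeasurableSet
    _ = volume s := by
      rw [Measure.prod_apply hS]
      simp only [hslice]
      rw [lintegral_indicator_one hs]

lemma clusterBox_subset (n : ℕ) :
    clusterBox n ⊆ (univ.pi fun _ => Icc 0 1) ∪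
      ⋃ i, {v | v i ∈ Icc (-1) 0 ∧ ∀ j, v j ∈ Icc (v i) (v i + 1)} := by
  rintro v ⟨hbox, hclose⟩
  by_cases hnonneg : ∀ j, 0 ≤ v j
  · exact Or.inl fun j _ => ⟨hnonneg j, (hbox j).2⟩
  push Not at hnonneg
  obtain ⟨j, hj⟩ := hnonneg
  have : Nonempty (Fin n) := ⟨j⟩
  obtain ⟨i, hmin⟩ := Finite.exists_min v
  refine Or.inr (mem_iUnion.2 ⟨i, ⟨(hbox i).1, (hmin j).trans hj.le⟩, fun l => ⟨hmin l, ?_⟩⟩)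
  linarith [(abs_le.1 (hclose l i)).2]

lemma volume_clusterBox_le (n : ℕ) : volume (clusterBox n) ≤ n + 1 := by
  calc volume (clusterBox n)
      ≤ volume (univ.pi fun _ : Fin n => Icc (0 : ℝ) 1) +
          ∑ i, volume {v : Fin n → ℝ | v i ∈ Icc (-1) 0 ∧ ∀ j, v j ∈ Icc (v i) (v i + 1)} :=
        (measure_mono (clusterBox_subset n)).trans <|
          (measure_union_le _ _).trans (add_le_add le_rfl (measure_iUnion_fintype_le _ _))
    _ ≤ 1 + ∑ _i : Fin n, volume (Icc (-1 : ℝ) 0) := by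
        gcongr with i
        · simp only [volume_pi_pi, Real.volume_Icc, sub_zero, ENNReal.ofReal_one,
            Finset.prod_const_one, le_rfl]
        · exact volume_setOf_mem_Icc_add_one_le i measurableSet_Icc
    _ = n + 1 := by simp [Real.volume_Icc, add_comm]

def cube (n d : ℕ) : Set (Fin n → Fin d → ℝ) := univ.pi fun _ => univ.pi fun _ => Icc (-1) 1

lemma isCompact_cube (n d : ℕ) : IsCompact (cube n d) :=
  isCompact_univ_pi fun _ => isCompact_univ_pi fun _ => isCompact_Icc

lemma preimage_piComm_pi_clusterBox (n d : ℕ) :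
    (Equiv.piComm fun (_ : Fin n) (_ : Fin d) => ℝ) ⁻¹' univ.pi (fun _ => clusterBox n) =
      cube n d ∩ {y | closeP 1 (range y)} := by
  ext y
  simp only [mem_preimage, mem_univ_pi, clusterBox, cube, mem_inter_iff, mem_ofPred_eq,
    closeP_range_iff, pi_norm_le_iff_of_nonneg zero_le_one, Real.norm_eq_abs, Pi.sub_apply,
    Equiv.piComm_apply, Function.swap, forall_and]
  exact and_congr forall_comm (forall_comm.trans (forall_congr' fun _ => forall_comm))

lemma volume_cube_inter_closeP_le (n d : ℕ) :
    volume (cube n d ∩ {y | closeP 1 (range y)}) ≤ ((n : ℝ≥0∞) + 1) ^ d := by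
  rw [← preimage_piComm_pi_clusterBox, (measurePreserving_piComm _ _).measure_preimage
    (MeasurableSet.univ_pi fun _ => measurableSet_clusterBox n).nullMeasurableSet, volume_pi_pi]
  simp only [Finset.prod_const, Finset.card_univ, Fintype.card_fin]
  exact pow_le_pow_left' (volume_clusterBox_le n) d

lemma setIntegral_cube_clusterInd_le (n d : ℕ) :
    ∫ y in cube n d, clusterInd y ≤ ((n : ℝ) + 1) ^ d := by
  unfold clusterInd
  simp_rw [ind_eq_indicator_one fun y : Fin n → Fin d → ℝ => closeP 1 (range y)]
  rw [integral_indicator_one (measurableSet_setOf_closeP_range d 1),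
    measureReal_restrict_apply (measurableSet_setOf_closeP_range d 1), inter_comm]
  refine ENNReal.toReal_le_of_le_ofReal (by positivity)
    ((volume_cube_inter_closeP_le n d).trans_eq ?_)
  rw [ENNReal.ofReal_pow (by positivity)]
  norm_cast

lemma integrableOn_cube_clusterInd (n d : ℕ) : IntegrableOn clusterInd (cube n d) :=
  Measure.integrableOn_of_bounded (M := 1) (isCompact_cube n d).measure_lt_top.ne
    (measurable_clusterInd d).aestronglyMeasurable
    (ae_of_all _ fun _ => by rw [Real.norm_of_nonneg (clusterInd_nonneg _)]; exact ind_le_one _)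

lemma MeasureTheory.IntegrableOn.mul_prod {α β : Type*} [MeasureSpace α] [MeasureSpace β]
    [SFinite (volume : Measure α)] [SFinite (volume : Measure β)] {f : α → ℝ} {g : β → ℝ}
    {s : Set α} {t : Set β} (hf : IntegrableOn f s) (hg : IntegrableOn g t) :
    IntegrableOn (fun p : α × β => f p.1 * g p.2) (s ×ˢ t) := by
  rw [IntegrableOn, Measure.volume_eq_prod, ← Measure.prod_restrict]
  exact Integrable.mul_prod hf hg

section
variable {A B C D : Type*} [MeasureSpace A] [MeasureSpace B] [MeasureSpace C] [MeasureSpace D]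
  [SFinite (volume : Measure A)] [SFinite (volume : Measure B)] [SFinite (volume : Measure C)]
  [SFinite (volume : Measure D)]

lemma setIntegral_prod_prod_prod_mul (f : A → ℝ) (g : B → ℝ) (h : C → ℝ) (u : D → ℝ)
    (s : Set A) (t : Set B) (v : Set C) (w : Set D) :
    ∫ p in s ×ˢ (t ×ˢ (v ×ˢ w)), f p.1 * (g p.2.1 * (h p.2.2.1 * u p.2.2.2)) =
      (∫ x in s, f x) * ((∫ y in t, g y) * ((∫ z in v, h z) * ∫ z in w, u z)) := by
  rw [Measure.volume_eq_prod,
    setIntegral_prod_mul f fun q : B × C × D => g q.1 * (h q.2.1 * u q.2.2),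
    Measure.volume_eq_prod, setIntegral_prod_mul g fun q : C × D => h q.1 * u q.2,
    Measure.volume_eq_prod, setIntegral_prod_mul h u]

end

theorem stmt12_general (d k r sY sZ mY mZ mW : ℕ)
    (hr : r ≤ k) (hsY : sY ≤ k) (hsZ : sZ ≤ min (k - r) (k - sY))
    (hmY : mY ≤ k) (hmZ : mZ ≤ min (k - r) (k - mY))
    (hmW : mW ≤ min (k - (sY + sZ)) (k - mY - mZ)) :
    (∫ p in ((Set.univ.pi fun _ : Fin k =>
                (Set.univ.pi fun _ : Fin d => Set.Icc (-1 : ℝ) 1)) ×ˢ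
             ((Set.univ.pi fun _ : Fin (k - r) =>
                (Set.univ.pi fun _ : Fin d => Set.Icc (-1 : ℝ) 1)) ×ˢ
              ((Set.univ.pi fun _ : Fin (k - (sY + sZ)) =>
                (Set.univ.pi fun _ : Fin d => Set.Icc (-1 : ℝ) 1)) ×ˢ
               (Set.univ.pi fun _ : Fin (k - (mY + mZ + mW)) =>
                (Set.univ.pi fun _ : Fin d => Set.Icc (-1 : ℝ) 1))))),
      ind (closeP 1 (Set.range p.1)) *
      ind (closeP 1 ((p.1 '' {i : Fin k | (i : ℕ) < r}) ∪ Set.range p.2.1)) *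
      ind (closeP 1 ((p.1 '' {i : Fin k | (i : ℕ) < sY}) ∪
                     (p.2.1 '' {i : Fin (k - r) | (i : ℕ) < sZ}) ∪ Set.range p.2.2.1)) *
      ind (closeP 1 ((p.1 '' {i : Fin k | (i : ℕ) < mY}) ∪
                     (p.2.1 '' {i : Fin (k - r) | (i : ℕ) < mZ}) ∪
                     (p.2.2.1 '' {i : Fin (k - (sY + sZ)) | (i : ℕ) < mW}) ∪
                     Set.range p.2.2.2)))
      ≤ (((k : ℝ) + 1) * ((k : ℝ) - (r : ℝ) + 1) *
          ((k : ℝ) - ((sY : ℝ) + (sZ : ℝ)) + 1) *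
          ((k : ℝ) - ((mY : ℝ) + (mZ : ℝ) + (mW : ℝ)) + 1)) ^ d := by
  have hs : sY + sZ ≤ k := by omega
  have hm : mY + mZ + mW ≤ k := by omega
  have hnonneg {n : ℕ} : 0 ≤ ∫ y in cube n d, clusterInd y :=
    integral_nonneg fun _ => clusterInd_nonneg _
  calc _ ≤ ∫ p in cube k d ×ˢ (cube (k - r) d ×ˢ (cube (k - (sY + sZ)) d ×ˢ
              cube (k - (mY + mZ + mW)) d)),
            clusterInd p.1 * (clusterInd p.2.1 * (clusterInd p.2.2.1 * clusterInd p.2.2.2)) := by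
        refine integral_mono_of_nonneg (ae_of_all _ fun p => ?_) ?_ (ae_of_all _ fun p => ?_)
        · apply_rules [mul_nonneg, ind_nonneg]
        · exact (integrableOn_cube_clusterInd _ _).mul_prod
            ((integrableOn_cube_clusterInd _ _).mul_prod
              ((integrableOn_cube_clusterInd _ _).mul_prod (integrableOn_cube_clusterInd _ _)))
        · dsimp only
          rw [mul_assoc, mul_assoc]
          gcongr ?_ * (?_ * (?_ * ?_))
          all_goals first
            | exact le_rfl
            | exact ind_closeP_union_range_le _ _
            | apply_rules [mul_nonneg, ind_nonneg, clusterInd_nonneg]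
    _ ≤ ((k : ℝ) + 1) ^ d * (((k - r : ℕ) + 1) ^ d * (((k - (sY + sZ) : ℕ) + 1) ^ d *
          ((k - (mY + mZ + mW) : ℕ) + 1) ^ d)) := by
        rw [setIntegral_prod_prod_prod_mul]
        gcongr
        all_goals first
          | exact setIntegral_cube_clusterInd_le _ _
          | apply_rules [mul_nonneg, hnonneg]
    _ = _ := by
        rw [Nat.cast_sub hr, Nat.cast_sub hs, Nat.cast_sub hm]
        push_cast
        simp only [mul_pow, mul_assoc]

/-- For all integers `d ≥ 1`, `k ≥ 1`, `0 ≤ r ≤ k`, `0 ≤ s_Y ≤ k`,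
`0 ≤ s_Z ≤ min(k−r, k−s_Y)`, `0 ≤ m_Y ≤ k`, `0 ≤ m_Z ≤ min(k−r, k−m_Y)`,
`0 ≤ m_W ≤ min(k−s, k−m_Y−m_Z)`, with `s := s_Y + s_Z` and `m := m_Y + m_Z + m_W`,
`∫_{(B)^{4k−r−s−m}} h_1(y) · h_1(y_{<r}, z) · h_1(y_{<s_Y}, z_{<s_Z}, w)
  · h_1(y_{<m_Y}, z_{<m_Z}, w_{<m_W}, u) dy dz dw du
  ≤ ((k+1)(k−r+1)(k−s+1)(k−m+1))^d`, where `B = [−1,1]^d ⊂ ℝ^d` with the `ℓ^∞` norm. -/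
theorem stmt12 (d k r sY sZ mY mZ mW : ℕ) (hd : 1 ≤ d) (hk : 1 ≤ k)
    (hr : r ≤ k) (hsY : sY ≤ k) (hsZ : sZ ≤ min (k - r) (k - sY))
    (hmY : mY ≤ k) (hmZ : mZ ≤ min (k - r) (k - mY))
    (hmW : mW ≤ min (k - (sY + sZ)) (k - mY - mZ)) :
    (∫ p in ((Set.univ.pi fun _ : Fin k =>
                (Set.univ.pi fun _ : Fin d => Set.Icc (-1 : ℝ) 1)) ×ˢ
             ((Set.univ.pi fun _ : Fin (k - r) =>
                (Set.univ.pi fun _ : Fin d => Set.Icc (-1 : ℝ) 1)) ×ˢ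
              ((Set.univ.pi fun _ : Fin (k - (sY + sZ)) =>
                (Set.univ.pi fun _ : Fin d => Set.Icc (-1 : ℝ) 1)) ×ˢ
               (Set.univ.pi fun _ : Fin (k - (mY + mZ + mW)) =>
                (Set.univ.pi fun _ : Fin d => Set.Icc (-1 : ℝ) 1))))),
      ind (closeP 1 (Set.range p.1)) *
      ind (closeP 1 ((p.1 '' {i : Fin k | (i : ℕ) < r}) ∪ Set.range p.2.1)) *
      ind (closeP 1 ((p.1 '' {i : Fin k | (i : ℕ) < sY}) ∪
                     (p.2.1 '' {i : Fin (k - r) | (i : ℕ) < sZ}) ∪ Set.range p.2.2.1)) *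
      ind (closeP 1 ((p.1 '' {i : Fin k | (i : ℕ) < mY}) ∪
                     (p.2.1 '' {i : Fin (k - r) | (i : ℕ) < mZ}) ∪
                     (p.2.2.1 '' {i : Fin (k - (sY + sZ)) | (i : ℕ) < mW}) ∪
                     Set.range p.2.2.2)))
      ≤ (((k : ℝ) + 1) * ((k : ℝ) - (r : ℝ) + 1) *
          ((k : ℝ) - ((sY : ℝ) + (sZ : ℝ)) + 1) *
          ((k : ℝ) - ((mY : ℝ) + (mZ : ℝ) + (mW : ℝ)) + 1)) ^ d :=
  stmt12_general d k r sY sZ mY mZ mW hr hsY hsZ hmY hmZ hmW
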